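/- Let X be a finite feature set partitioned into groups via a map grp : X → G, d(g) a distribution over {x : grp(x) = g} for each g, τ : X → ℝ≥0, b : G → ℝ. For any policy μ : X → [0,1] (which may depend on all features except explicit group status but where features determine group), there exists a group-based policy ν : G → [0,1] such that for all pairs g ≠ g' with b(g) > b(g'), out_ν(g) − out_ν(g') ≤ out_μ(g) − out_μ(g'), where out_π(g) = b(g) + ∑_{x : grp(x)=g} π(x)·τ(x)·d(g)(x) for feature policies and out_ν(g) = b(g) + ν(g)·∑_{x : grp(x)=g} τ(x)·d(g)(x) for group policies. (Take ν(g) = (∑_x μ(x)τ(x)d(g)(x)) / (∑_x τ(x)d(g)(x)) when the denominator is positive, ν(g) arbitrary otherwise.) -/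

import Mathlib

open Finset

/-!
The group policy treats every member of group `g` with the probability `ν g` equal to the
average of `μ` weighted by the effects `τ x * d g x`. By construction `ν g` times the total
effect in `g` equals the expected effect of `μ` in `g`, so both policies give every group the
same expected outcome, and in particular the same disparities. Since `0 ≤ μ ≤ 1` and the
weights are nonnegative, that average lies in `[0, 1]`.
-/

section EffectWeightedAverage

variable {ι 𝕜 : Type*} [Field 𝕜] [LinearOrder 𝕜] [IsStrictOrderedRing 𝕜]
  {s : Finset ι} {μ w : ι → 𝕜}

/-- When the total weight vanishes the average is `0`, by the convention `a / 0 = 0`. -/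
def effectWeightedAverage (s : Finset ι) (μ w : ι → 𝕜) : 𝕜 :=
  (∑ i ∈ s, μ i * w i) / ∑ i ∈ s, w i

lemma sum_mul_nonneg_of_nonneg (hw : ∀ i ∈ s, 0 ≤ w i) (hμ : ∀ i ∈ s, 0 ≤ μ i) :
    0 ≤ ∑ i ∈ s, μ i * w i :=
  sum_nonneg fun i hi => mul_nonneg (hμ i hi) (hw i hi)

lemma sum_mul_le_sum_of_le_one (hw : ∀ i ∈ s, 0 ≤ w i) (hμ : ∀ i ∈ s, μ i ≤ 1) :
    ∑ i ∈ s, μ i * w i ≤ ∑ i ∈ s, w i :=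
  sum_le_sum fun i hi => mul_le_of_le_one_left (hw i hi) (hμ i hi)

lemma effectWeightedAverage_mem_Icc (hw : ∀ i ∈ s, 0 ≤ w i)
    (hμ : ∀ i ∈ s, 0 ≤ μ i ∧ μ i ≤ 1) :
    0 ≤ effectWeightedAverage s μ w ∧ effectWeightedAverage s μ w ≤ 1 :=
  ⟨div_nonneg (sum_mul_nonneg_of_nonneg hw fun i hi => (hμ i hi).1)
      (sum_nonneg hw),
    div_le_one_of_le₀ (sum_mul_le_sum_of_le_one hw fun i hi => (hμ i hi).2)
      (sum_nonneg hw)⟩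

lemma effectWeightedAverage_mul_sum (hw : ∀ i ∈ s, 0 ≤ w i)
    (hμ : ∀ i ∈ s, 0 ≤ μ i ∧ μ i ≤ 1) :
    effectWeightedAverage s μ w * ∑ i ∈ s, w i = ∑ i ∈ s, μ i * w i :=
  div_mul_cancel_of_imp fun h => le_antisymm
    (h ▸ sum_mul_le_sum_of_le_one hw fun i hi => (hμ i hi).2)
    (sum_mul_nonneg_of_nonneg hw fun i hi => (hμ i hi).1)

end EffectWeightedAverage

theorem group_policy_no_worse_than_feature_policy_general
    {X G : Type*} [Fintype X] [Fintype G] [DecidableEq G]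
    (grp : X → G)
    (d : G → X → ℝ) (hd0 : ∀ g x, 0 ≤ d g x)
    (τ : X → ℝ) (hτ : ∀ x, 0 ≤ τ x)
    (b : G → ℝ)
    (μ : X → ℝ) (hμ : ∀ x, 0 ≤ μ x ∧ μ x ≤ 1) :
    ∃ ν : G → ℝ, (∀ g, 0 ≤ ν g ∧ ν g ≤ 1) ∧
      ∀ g g' : G, g ≠ g' → b g > b g' →
        (b g + ν g * ∑ x ∈ univ.filter (fun x => grp x = g), τ x * d g x) -
          (b g' + ν g' * ∑ x ∈ univ.filter (fun x => grp x = g'), τ x * d g' x) ≤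
        (b g + ∑ x ∈ univ.filter (fun x => grp x = g), μ x * τ x * d g x) -
          (b g' + ∑ x ∈ univ.filter (fun x => grp x = g'), μ x * τ x * d g' x) := by
  have hw : ∀ g, ∀ x ∈ univ.filter (fun x => grp x = g), 0 ≤ τ x * d g x :=
    fun g x _ => mul_nonneg (hτ x) (hd0 g x)
  have same_outcome : ∀ g,
      effectWeightedAverage (univ.filter (fun x => grp x = g)) μ (fun x => τ x * d g x) *
          ∑ x ∈ univ.filter (fun x => grp x = g), τ x * d g x =
        ∑ x ∈ univ.filter (fun x => grp x = g), μ x * τ x * d g x := by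
    intro g
    simp_rw [mul_assoc]
    exact effectWeightedAverage_mul_sum (hw g) fun x _ => hμ x
  refine ⟨fun g => effectWeightedAverage (univ.filter (fun x => grp x = g)) μ
      (fun x => τ x * d g x), fun g => effectWeightedAverage_mem_Icc (hw g) fun x _ => hμ x,
    fun g g' _ _ => ?_⟩
  rw [same_outcome g, same_outcome g']

/-- Proposition 6 (formalized): any feature-based policy `μ : X → [0,1]` can be
matched (or improved) pairwise by a group-based randomized policy `ν : G → [0,1]`. -/
theorem group_policy_no_worse_than_feature_policy
    {X G : Type*} [Fintype X] [Fintype G] [DecidableEq G]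
    (grp : X → G)
    (d : G → X → ℝ) (hd0 : ∀ g x, 0 ≤ d g x)
    (hdsupp : ∀ g x, grp x ≠ g → d g x = 0)
    (hd1 : ∀ g, ∑ x ∈ univ.filter (fun x => grp x = g), d g x = 1)
    (τ : X → ℝ) (hτ : ∀ x, 0 ≤ τ x)
    (b : G → ℝ)
    (μ : X → ℝ) (hμ : ∀ x, 0 ≤ μ x ∧ μ x ≤ 1) :
    ∃ ν : G → ℝ, (∀ g, 0 ≤ ν g ∧ ν g ≤ 1) ∧
      ∀ g g' : G, g ≠ g' → b g > b g' →
        (b g + ν g * ∑ x ∈ univ.filter (fun x => grp x = g), τ x * d g x) -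
          (b g' + ν g' * ∑ x ∈ univ.filter (fun x => grp x = g'), τ x * d g' x) ≤
        (b g + ∑ x ∈ univ.filter (fun x => grp x = g), μ x * τ x * d g x) -
          (b g' + ∑ x ∈ univ.filter (fun x => grp x = g'), μ x * τ x * d g' x) :=
  group_policy_no_worse_than_feature_policy_general grp d hd0 τ hτ b μ hμ
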